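/- arXiv:1912.09319 — 3 statements merged into one kernel-verified Lean document; each statement's English description precedes it below -/
import Mathlib

section
/- The Babuška problem is well-posed: for Γ = ∂Ω, V = H^1(Ω), Q = H^{-1/2}(Γ), W = V × Q, and the operator 𝒜(u,p) given by the bilinear form a((u,p),(v,q)) = (∇u,∇v)_Ω + (u,v)_Ω + (Tu,q)_Γ + (Tv,p)_Γ, for every continuous linear functional L ∈ W′ there exists a unique (u,p) ∈ W with 𝒜(u,p) = L, and the solution depends continuously on L. -/
open RealInnerProductSpace

set_option maxHeartbeats 1000000 in
/-- Well-posedness of the Babuška problem.  `V` is H¹(Ω) with its inner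
product `⟪u,v⟫ = (∇u,∇v)_Ω + (u,v)_Ω`, `T : V → Hhalf` is the (surjective, with
bounded right inverse) trace operator onto H^{1/2}(Γ), and `Q = H^{-1/2}(Γ)` is the
dual of `Hhalf`; the duality pairing `(Tv, p)_Γ` is `p (T v)`.  For every continuous
linear functional `L` on `W = V × Q` there is a unique `(u,p) ∈ W` with
`a((u,p),(v,q)) = (∇u,∇v)_Ω + (u,v)_Ω + (Tu,q)_Γ + (Tv,p)_Γ = L(v,q)` for all `(v,q)`,
and the solution depends continuously on `L`. -/
theorem babuska_wellposed
    {V Hhalf : Type*}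
    [NormedAddCommGroup V] [InnerProductSpace ℝ V] [CompleteSpace V]
    [NormedAddCommGroup Hhalf] [InnerProductSpace ℝ Hhalf] [CompleteSpace Hhalf]
    (T : V →L[ℝ] Hhalf) (hT : Function.Surjective T)
    (E : Hhalf →L[ℝ] V) (hE : ∀ g, T (E g) = g) :
    (∀ L : (V × StrongDual ℝ Hhalf) →L[ℝ] ℝ,
        ∃! w : V × StrongDual ℝ Hhalf,
          ∀ v : V, ∀ q : StrongDual ℝ Hhalf,
            ⟪w.1, v⟫ + q (T w.1) + w.2 (T v) = L (v, q)) ∧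
      ∃ C > 0, ∀ L : (V × StrongDual ℝ Hhalf) →L[ℝ] ℝ,
        ∀ w : V × StrongDual ℝ Hhalf,
          (∀ v : V, ∀ q : StrongDual ℝ Hhalf,
              ⟪w.1, v⟫ + q (T w.1) + w.2 (T v) = L (v, q)) →
            ‖w.1‖ + ‖w.2‖ ≤ C * ‖L‖ := by
  classical
  haveI : CompleteSpace (LinearMap.ker (T : V →ₗ[ℝ] Hhalf)) := (ContinuousLinearMap.isClosed_ker T).completeSpace_coe
  set K : Submodule ℝ V := LinearMap.ker (T : V →ₗ[ℝ] Hhalf) with hKdef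
  constructor
  · intro L
    -- Riesz representative for the Q-part of L
    set g : Hhalf := (InnerProductSpace.toDual ℝ Hhalf).symm
      ((L.comp (ContinuousLinearMap.inr ℝ V (StrongDual ℝ Hhalf))).comp
        (InnerProductSpace.toDual ℝ Hhalf).toContinuousLinearEquiv.toContinuousLinearMap) with hgdef
    have hg : ∀ q : StrongDual ℝ Hhalf, q g = L (0, q) := by
      intro q
      have hq : q = InnerProductSpace.toDual ℝ Hhalf
          ((InnerProductSpace.toDual ℝ Hhalf).symm q) := by simp
      rw [hq, InnerProductSpace.toDual_apply_apply, real_inner_comm,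
        ← InnerProductSpace.toDual_apply_apply]
      rw [hgdef, LinearIsometryEquiv.apply_symm_apply]
      simp
    -- Riesz representative for the V-part of L
    set f : V := (InnerProductSpace.toDual ℝ V).symm
      (L.comp (ContinuousLinearMap.inl ℝ V (StrongDual ℝ Hhalf))) with hfdef
    have hf : ∀ v : V, ⟪f, v⟫ = L (v, 0) := by
      intro v
      rw [← InnerProductSpace.toDual_apply_apply, hfdef, LinearIsometryEquiv.apply_symm_apply]
      simp
    set u : V := E g + (Submodule.orthogonalProjection K (f - E g) : V) with hudef
    have hTu : T u = g := by
      have hk : ((Submodule.orthogonalProjection K (f - E g) : V)) ∈ K :=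
        (Submodule.orthogonalProjection K (f - E g)).2
      have : T ((Submodule.orthogonalProjection K (f - E g) : V)) = 0 := hk
      rw [hudef, map_add, hE, this, add_zero]
    have hperp : ∀ k ∈ K, ⟪u - f, k⟫ = 0 := by
      intro k hk
      have h0 : ⟪(f - E g) - (Submodule.orthogonalProjection K (f - E g) : V), k⟫ = 0 :=
        Submodule.starProjection_inner_eq_zero (K := K) (f - E g) k hk
      have huf : u - f = -((f - E g) - (Submodule.orthogonalProjection K (f - E g) : V)) := by
        rw [hudef]; abel
      rw [huf, inner_neg_left, h0, neg_zero]
    set p : StrongDual ℝ Hhalf :=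
      ((L.comp (ContinuousLinearMap.inl ℝ V (StrongDual ℝ Hhalf))) -
        (InnerProductSpace.toDual ℝ V u : V →L[ℝ] ℝ)).comp E with hpdef
    have hp : ∀ x : Hhalf, p x = L (E x, 0) - ⟪u, E x⟫ := by
      intro x
      simp [hpdef, InnerProductSpace.toDual_apply_apply]
    have hmain : ∀ v : V, ∀ q : StrongDual ℝ Hhalf,
        ⟪u, v⟫ + q (T u) + p (T v) = L (v, q) := by
      intro v q
      have hker : v - E (T v) ∈ K := by
        simp [hKdef, LinearMap.mem_ker, hE]
      have h1 : ⟪u, v - E (T v)⟫ = ⟪f, v - E (T v)⟫ := by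
        have := hperp _ hker
        rw [inner_sub_left] at this
        linarith
      have h2 : ⟪u, v⟫ - ⟪u, E (T v)⟫ = L (v, 0) - L (E (T v), 0) := by
        rw [← inner_sub_right, h1, hf]
        have hpr : ((v - E (T v), (0 : StrongDual ℝ Hhalf)) : V × StrongDual ℝ Hhalf)
            = (v, 0) - (E (T v), 0) := by simp
        rw [hpr, map_sub]
      rw [hTu, hg, hp]
      have hsum : L (v, 0) + L (0, q) = L (v, q) := by
        rw [← map_add]; congr 1; simp
      linarith
    refine ⟨(u, p), hmain, ?_⟩
    intro w' hw'
    have hdiff : ∀ v : V, ∀ q : StrongDual ℝ Hhalf,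
        ⟪w'.1 - u, v⟫ + q (T (w'.1 - u)) + (w'.2 - p) (T v) = 0 := by
      intro v q
      have h1 := hw' v q
      have h2 := hmain v q
      simp only [inner_sub_left, map_sub, ContinuousLinearMap.sub_apply]
      linarith
    have hTd : T (w'.1 - u) = 0 := by
      have h0 := hdiff 0 (InnerProductSpace.toDual ℝ Hhalf (T (w'.1 - u)))
      simp only [inner_zero_right, map_zero, InnerProductSpace.toDual_apply_apply] at h0
      rw [← @inner_self_eq_zero ℝ]
      linarith
    have hd : w'.1 = u := by
      have h0 := hdiff (w'.1 - u) 0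
      rw [hTd] at h0
      simp only [map_zero, ContinuousLinearMap.zero_apply, add_zero] at h0
      have h1 : ⟪w'.1 - u, w'.1 - u⟫ = (0 : ℝ) := by linarith
      rw [inner_self_eq_zero, sub_eq_zero] at h1
      exact h1
    have hr : w'.2 = p := by
      ext x
      obtain ⟨v, hv⟩ := hT x
      have h0 := hdiff v 0
      rw [hd, sub_self, map_zero, inner_zero_left, ContinuousLinearMap.zero_apply,
        ContinuousLinearMap.sub_apply] at h0
      rw [← hv]
      linarith
    exact Prod.ext hd hr
  · refine ⟨1 + 4 * ‖E‖ + 2 * ‖E‖ ^ 2, by positivity, ?_⟩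
    intro L w h
    set u := w.1
    set p := w.2
    have hLnn : (0:ℝ) ≤ ‖L‖ := norm_nonneg L
    have hEnn : (0:ℝ) ≤ ‖E‖ := norm_nonneg E
    -- bound on ‖T u‖
    have hq : ∀ q : StrongDual ℝ Hhalf, q (T u) = L (0, q) := by
      intro q
      have h0 := h 0 q
      simpa using h0
    have hLv : ∀ v : V, |L (v, 0)| ≤ ‖L‖ * ‖v‖ := by
      intro v
      have := L.le_opNorm (v, 0)
      rw [Real.norm_eq_abs] at this
      simpa [Prod.norm_def] using this
    have hLq : ∀ q : StrongDual ℝ Hhalf, |L (0, q)| ≤ ‖L‖ * ‖q‖ := by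
      intro q
      have := L.le_opNorm (0, q)
      rw [Real.norm_eq_abs] at this
      simpa [Prod.norm_def] using this
    have hTu : ‖T u‖ ≤ ‖L‖ := by
      have h0 := hq (InnerProductSpace.toDual ℝ Hhalf (T u))
      rw [InnerProductSpace.toDual_apply_apply, real_inner_self_eq_norm_sq] at h0
      have h1 := (hLq (InnerProductSpace.toDual ℝ Hhalf (T u))).trans_eq' (by rw [← h0])
      rw [LinearIsometryEquiv.norm_map] at h1
      have h2 : ‖T u‖ ^ 2 ≤ ‖L‖ * ‖T u‖ := (abs_le.mp h1).2.trans_eq' (by ring)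
      nlinarith [norm_nonneg (T u), sq_nonneg (‖T u‖ - ‖L‖)]
    -- bound on ‖u‖
    have hk : ‖u - E (T u)‖ ≤ (1 + ‖E‖) * ‖L‖ := by
      set k := u - E (T u) with hkdef2
      have hTk : T k = 0 := by simp [hkdef2, hE]
      have huk : ⟪u, k⟫ = L (k, 0) := by
        have h0 := h k (0 : StrongDual ℝ Hhalf)
        rw [hTk] at h0
        simpa using h0
      have hk2 : ‖k‖ ^ 2 = L (k, 0) - ⟪E (T u), k⟫ := by
        rw [← real_inner_self_eq_norm_sq, hkdef2, inner_sub_left]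
        rw [← hkdef2, huk]
      have hETu : ‖E (T u)‖ ≤ ‖E‖ * ‖L‖ :=
        (E.le_opNorm (T u)).trans (by
          have := mul_le_mul_of_nonneg_left hTu hEnn
          linarith)
      have hbound : ‖k‖ ^ 2 ≤ (1 + ‖E‖) * ‖L‖ * ‖k‖ := by
        rw [hk2]
        have h1 := hLv k
        have h2 := abs_real_inner_le_norm (E (T u)) k
        have h3 : |⟪E (T u), k⟫| ≤ ‖E‖ * ‖L‖ * ‖k‖ :=
          h2.trans (mul_le_mul_of_nonneg_right hETu (norm_nonneg k))
        have h4 := (abs_le.mp h1).2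
        have h5 := (abs_le.mp h3).1
        nlinarith [norm_nonneg k]
      nlinarith [norm_nonneg k, sq_nonneg (‖k‖ - (1 + ‖E‖) * ‖L‖), mul_nonneg hLnn hEnn]
    have hu : ‖u‖ ≤ (1 + 2 * ‖E‖) * ‖L‖ := by
      have h1 : u = (u - E (T u)) + E (T u) := by abel
      have h2 := norm_add_le (u - E (T u)) (E (T u))
      have hETu : ‖E (T u)‖ ≤ ‖E‖ * ‖L‖ :=
        (E.le_opNorm (T u)).trans (by nlinarith)
      calc ‖u‖ = ‖(u - E (T u)) + E (T u)‖ := by rw [← h1]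
        _ ≤ ‖u - E (T u)‖ + ‖E (T u)‖ := h2
        _ ≤ (1 + ‖E‖) * ‖L‖ + ‖E‖ * ‖L‖ := add_le_add hk hETu
        _ = (1 + 2 * ‖E‖) * ‖L‖ := by ring
    -- bound on ‖p‖
    have hpb : ‖p‖ ≤ ‖E‖ * (2 + 2 * ‖E‖) * ‖L‖ := by
      apply ContinuousLinearMap.opNorm_le_bound
      · positivity
      intro x
      have h0 := h (E x) (0 : StrongDual ℝ Hhalf)
      rw [hE] at h0
      have hpx : p x = L (E x, 0) - ⟪u, E x⟫ := by
        have hz : (0 : StrongDual ℝ Hhalf) (T u) = 0 :=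
          ContinuousLinearMap.zero_apply _
        linarith [h0, hz]
      rw [Real.norm_eq_abs, hpx]
      have h1 := hLv (E x)
      have h2 := abs_real_inner_le_norm u (E x)
      have hEx := E.le_opNorm x
      have h3 : |L (E x, 0) - ⟪u, E x⟫| ≤ |L (E x, 0)| + |⟪u, E x⟫| := abs_sub _ _
      have h4 : |L (E x, 0)| ≤ ‖L‖ * (‖E‖ * ‖x‖) :=
        h1.trans (mul_le_mul_of_nonneg_left hEx hLnn)
      have h5 : |⟪u, E x⟫| ≤ ((1 + 2 * ‖E‖) * ‖L‖) * (‖E‖ * ‖x‖) := by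
        refine h2.trans ?_
        have := mul_le_mul hu hEx (norm_nonneg _) (by positivity)
        nlinarith [norm_nonneg x, norm_nonneg (E x)]
      calc |L (E x, 0) - ⟪u, E x⟫| ≤ |L (E x, 0)| + |⟪u, E x⟫| := h3
        _ ≤ ‖L‖ * (‖E‖ * ‖x‖) + ((1 + 2 * ‖E‖) * ‖L‖) * (‖E‖ * ‖x‖) := add_le_add h4 h5
        _ ≤ ‖E‖ * (2 + 2 * ‖E‖) * ‖L‖ * ‖x‖ := by nlinarith [norm_nonneg x]
    calc ‖u‖ + ‖p‖ ≤ (1 + 2 * ‖E‖) * ‖L‖ + ‖E‖ * (2 + 2 * ‖E‖) * ‖L‖ := add_le_add hu hpb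
      _ = (1 + 4 * ‖E‖ + 2 * ‖E‖ ^ 2) * ‖L‖ := by ring
end

section
/- A saddle point operator 𝒜 = [[A, B′],[B, 0]] on V × Q is an isomorphism from V × Q onto its dual provided: A : V → V′ is bounded, symmetric and coercive on the kernel of B, B : V → Q′ is bounded and satisfies the inf-sup condition inf_{q≠0} sup_{v≠0} (Bv,q)/(‖v‖_V ‖q‖_Q) ≥ β > 0 (Brezzi conditions). -/
set_option maxHeartbeats 4000000

open RealInnerProductSpace

noncomputable def rieszOp {V W : Type*} [NormedAddCommGroup V] [InnerProductSpace ℝ V]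
    [NormedAddCommGroup W] [InnerProductSpace ℝ W] [CompleteSpace W]
    (B : V →L[ℝ] StrongDual ℝ W) : V →L[ℝ] W :=
  { toFun := fun v => (InnerProductSpace.toDual ℝ W).symm (B v)
    map_add' := fun x y => by simp
    map_smul' := fun r x => by simp
    cont := (InnerProductSpace.toDual ℝ W).symm.continuous.comp B.continuous }

lemma rieszOp_norm {V W : Type*} [NormedAddCommGroup V] [InnerProductSpace ℝ V]
    [NormedAddCommGroup W] [InnerProductSpace ℝ W] [CompleteSpace W]
    (B : V →L[ℝ] StrongDual ℝ W) (v : V) : ‖rieszOp B v‖ = ‖B v‖ :=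
  LinearIsometryEquiv.norm_map (InnerProductSpace.toDual ℝ W).symm (B v)

lemma rieszOp_inner {V W : Type*} [NormedAddCommGroup V] [InnerProductSpace ℝ V]
    [NormedAddCommGroup W] [InnerProductSpace ℝ W] [CompleteSpace W]
    (B : V →L[ℝ] StrongDual ℝ W) (v : V) (w : W) :
    ⟪rieszOp B v, w⟫ = B v w :=
  InnerProductSpace.toDual_symm_apply

/-- An operator bounded below has closed range, and every element of the closure
of the range is attained. Packaged facts about a bounded-below operator. -/
lemma boundedBelow_isClosed_range {X Y : Type*} [NormedAddCommGroup X] [InnerProductSpace ℝ X]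
    [CompleteSpace X] [NormedAddCommGroup Y] [InnerProductSpace ℝ Y]
    (T : X →L[ℝ] Y) (c : ℝ) (hc : 0 < c) (hb : ∀ x, c * ‖x‖ ≤ ‖T x‖) :
    IsClosed ((LinearMap.range (T : X →ₗ[ℝ] Y) : Submodule ℝ Y) : Set Y) := by
  have anti : AntilipschitzWith (c⁻¹).toNNReal T := by
    refine ContinuousLinearMap.antilipschitz_of_bound T fun x => ?_
    rw [Real.coe_toNNReal _ (by positivity), inv_mul_eq_div, le_div_iff₀ hc, mul_comm]
    exact hb x
  exact anti.isClosed_range T.uniformContinuous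

/-- Brezzi's theorem.  `V`, `Q` Hilbert spaces, `A : V → V′` bounded
symmetric and coercive (with constant `α > 0`) on `ker B`, `B : V → Q′` bounded
satisfying the inf-sup condition with constant `β > 0`.  Then the saddle point
operator `𝒜(u,p) = (Au + B′p, Bu)`, i.e. the form
`((u,p),(v,q)) ↦ (Au,v) + (Bv,p) + (Bu,q)`, is an isomorphism from `V × Q` onto its
dual: every functional `F ∈ (V × Q)′` has a unique preimage, and the inverse is
bounded. -/
theorem brezzi_saddle_point_isomorphism
    {V Q : Type*}
    [NormedAddCommGroup V] [InnerProductSpace ℝ V] [CompleteSpace V]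
    [NormedAddCommGroup Q] [InnerProductSpace ℝ Q] [CompleteSpace Q]
    (A : V →L[ℝ] StrongDual ℝ V) (B : V →L[ℝ] StrongDual ℝ Q)
    (hA_symm : ∀ u v : V, A u v = A v u)
    (α : ℝ) (hα : 0 < α)
    (hA_coercive : ∀ v : V, (∀ q : Q, B v q = 0) → α * ‖v‖ ^ 2 ≤ A v v)
    (β : ℝ) (hβ : 0 < β)
    (hB_infsup : ∀ q : Q, β * ‖q‖ ≤ ⨆ v : {v : V // v ≠ 0}, B (v : V) q / ‖(v : V)‖) :
    (∀ F : (V × Q) →L[ℝ] ℝ,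
        ∃! w : V × Q, ∀ v : V, ∀ q : Q,
          A w.1 v + B v w.2 + B w.1 q = F (v, q)) ∧
      ∃ C > 0, ∀ F : (V × Q) →L[ℝ] ℝ, ∀ w : V × Q,
        (∀ v : V, ∀ q : Q, A w.1 v + B v w.2 + B w.1 q = F (v, q)) →
          ‖w.1‖ + ‖w.2‖ ≤ C * ‖F‖ := by
  classical
  obtain ⟨E, hEinner, hEnorm⟩ :
      ∃ E : V →L[ℝ] V, (∀ u v : V, ⟪E u, v⟫ = A u v) ∧ (∀ u : V, ‖E u‖ ≤ ‖A‖ * ‖u‖) :=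
    ⟨rieszOp A, fun u v => rieszOp_inner A u v,
      fun u => by rw [rieszOp_norm]; exact A.le_opNorm u⟩
  obtain ⟨Bo, hBoinner⟩ : ∃ Bo : V →L[ℝ] Q, ∀ (v : V) (q : Q), ⟪Bo v, q⟫ = B v q :=
    ⟨rieszOp B, fun v q => rieszOp_inner B v q⟩
  obtain ⟨Bt, hBtinner⟩ : ∃ Bt : Q →L[ℝ] V, ∀ (q : Q) (v : V), ⟪Bt q, v⟫ = B v q :=
    ⟨ContinuousLinearMap.adjoint Bo, fun q v => by
      rw [ContinuousLinearMap.adjoint_inner_left, real_inner_comm, hBoinner]⟩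
  -- Bt is bounded below
  have hBt_below : ∀ q : Q, β * ‖q‖ ≤ ‖Bt q‖ := by
    intro q
    refine le_trans (hB_infsup q) ?_
    rcases isEmpty_or_nonempty {v : V // v ≠ 0} with h | h
    · rw [Real.iSup_of_isEmpty]; positivity
    · refine ciSup_le fun v => ?_
      have hv : (0:ℝ) < ‖(v : V)‖ := norm_pos_iff.mpr v.2
      rw [div_le_iff₀ hv, ← hBtinner]
      exact (real_inner_le_norm _ _).trans (by rw [mul_comm])
  have hBt_inj : ∀ q : Q, Bt q = 0 → q = 0 := by
    intro q hq
    have h1 := hBt_below q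
    rw [hq, norm_zero] at h1
    have h2 : ‖q‖ ≤ 0 := by
      by_contra h3
      push_neg at h3
      nlinarith
    simpa [norm_le_zero_iff] using h2
  have hBt_closedRange : IsClosed ((LinearMap.range (Bt : Q →ₗ[ℝ] V) : Submodule ℝ V) : Set V) :=
    boundedBelow_isClosed_range Bt β hβ hBt_below
  -- kernel of B
  set K : Submodule ℝ V := LinearMap.ker (Bo : V →ₗ[ℝ] Q) with hKdef
  have hK_mem : ∀ v : V, v ∈ K ↔ ∀ q : Q, B v q = 0 := by
    intro v
    constructor
    · intro hv q
      rw [← hBoinner]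
      have h1 : Bo v = 0 := hv
      rw [h1, inner_zero_left]
    · intro hv
      have h1 : ⟪Bo v, Bo v⟫ = 0 := by rw [hBoinner]; exact hv _
      exact inner_self_eq_zero.mp h1
  have hK_closed : IsClosed (K : Set V) := ContinuousLinearMap.isClosed_ker Bo
  haveI : CompleteSpace K := hK_closed.completeSpace_coe
  haveI : CompleteSpace (LinearMap.range (Bt : Q →ₗ[ℝ] V) : Submodule ℝ V) := hBt_closedRange.completeSpace_coe
  -- range Bt = Kᗮ
  have horth : (LinearMap.range (Bt : Q →ₗ[ℝ] V) : Submodule ℝ V)ᗮ = K := by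
    ext v
    rw [Submodule.mem_orthogonal, hK_mem]
    constructor
    · intro h q
      have h2 := h (Bt q) ⟨q, rfl⟩
      rw [hBtinner] at h2
      exact h2
    · intro h u hu
      obtain ⟨q, rfl⟩ := hu
      rw [ContinuousLinearMap.coe_coe, hBtinner]
      exact h q
  have hrange : (LinearMap.range (Bt : Q →ₗ[ℝ] V) : Submodule ℝ V) = Kᗮ := by
    conv_lhs => rw [← Submodule.orthogonal_orthogonal (LinearMap.range (Bt : Q →ₗ[ℝ] V) : Submodule ℝ V)]
    rw [horth]
  -- Bo is surjective
  have hBo_surj : ∀ g : Q, ∃ u : V, Bo u = g := by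
    have hT_coer : ∀ q : Q, β ^ 2 * ‖q‖ ^ 2 ≤ ⟪(Bo.comp Bt) q, q⟫ := by
      intro q
      rw [ContinuousLinearMap.comp_apply, hBoinner, ← hBtinner q (Bt q),
        real_inner_self_eq_norm_sq]
      have h := hBt_below q
      have h' := mul_le_mul h h (by positivity : (0:ℝ) ≤ β * ‖q‖) (norm_nonneg (Bt q))
      nlinarith [h']
    have hT_below : ∀ q : Q, β ^ 2 * ‖q‖ ≤ ‖(Bo.comp Bt) q‖ := by
      intro q
      rcases eq_or_lt_of_le (norm_nonneg q) with h | h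
      · rw [← h]; simp
      · have h1 := hT_coer q
        have h2 : ⟪(Bo.comp Bt) q, q⟫ ≤ ‖(Bo.comp Bt) q‖ * ‖q‖ := real_inner_le_norm _ q
        nlinarith
    have hT_closed : IsClosed ((LinearMap.range ((Bo.comp Bt : Q →L[ℝ] Q) : Q →ₗ[ℝ] Q) : Submodule ℝ Q) : Set Q) :=
      boundedBelow_isClosed_range _ (β ^ 2) (by positivity) hT_below
    haveI : CompleteSpace (LinearMap.range ((Bo.comp Bt : Q →L[ℝ] Q) : Q →ₗ[ℝ] Q) : Submodule ℝ Q) :=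
      hT_closed.completeSpace_coe
    have hT_top : (LinearMap.range ((Bo.comp Bt : Q →L[ℝ] Q) : Q →ₗ[ℝ] Q) : Submodule ℝ Q) = ⊤ := by
      rw [← Submodule.orthogonal_orthogonal (LinearMap.range ((Bo.comp Bt : Q →L[ℝ] Q) : Q →ₗ[ℝ] Q) : Submodule ℝ Q),
        Submodule.eq_top_iff']
      intro v
      rw [Submodule.mem_orthogonal]
      intro w hw
      rw [Submodule.mem_orthogonal] at hw
      have h2 : ⟪(Bo.comp Bt) w, w⟫ = 0 := hw ((Bo.comp Bt) w) ⟨w, rfl⟩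
      have h1 := hT_coer w
      rw [h2] at h1
      have h3 : ‖w‖ ^ 2 = 0 :=
        le_antisymm (by nlinarith [mul_pos hβ hβ, sq_nonneg ‖w‖]) (sq_nonneg _)
      have hw0 : w = 0 := norm_eq_zero.mp (sq_eq_zero_iff.mp h3)
      rw [hw0, inner_zero_left]
    intro g
    have hg : g ∈ (LinearMap.range ((Bo.comp Bt : Q →L[ℝ] Q) : Q →ₗ[ℝ] Q) : Submodule ℝ Q) := hT_top ▸ Submodule.mem_top
    obtain ⟨q, hq⟩ := hg
    exact ⟨Bt q, hq⟩
  -- Lax-Milgram on K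
  have hlaxex : ∀ r : ↥K, ∃ w : ↥K, ∀ v : ↥K, A (w : V) (v : V) = ⟪(r : V), (v : V)⟫ := by
    have haK_coer : IsCoercive (((A.comp K.subtypeL).flip.comp K.subtypeL)) := by
      refine ⟨α, hα, fun u => ?_⟩
      have haK : (((A.comp K.subtypeL).flip.comp K.subtypeL)) u u = A (u : V) (u : V) := rfl
      rw [haK]
      have hu : ∀ q : Q, B (u : V) q = 0 := (hK_mem _).mp u.2
      have h1 := hA_coercive (u : V) hu
      have hnorm : ‖u‖ = ‖(u : V)‖ := rfl
      rw [hnorm]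
      nlinarith [h1]
    intro r
    refine ⟨haK_coer.continuousLinearEquivOfBilin.symm r, fun v => ?_⟩
    have h := haK_coer.continuousLinearEquivOfBilin_apply
      (haK_coer.continuousLinearEquivOfBilin.symm r) v
    rw [ContinuousLinearEquiv.apply_symm_apply] at h
    rw [Submodule.coe_inner] at h
    have haK : (((A.comp K.subtypeL).flip.comp K.subtypeL))
        (haK_coer.continuousLinearEquivOfBilin.symm r) v =
        A (v : V) ((haK_coer.continuousLinearEquivOfBilin.symm r : ↥K) : V) := rfl
    rw [haK] at h
    rw [hA_symm]
    exact h.symm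
  -- Existence
  have hex : ∀ F : (V × Q) →L[ℝ] ℝ, ∃ w : V × Q, ∀ v : V, ∀ q : Q,
      A w.1 v + B v w.2 + B w.1 q = F (v, q) := by
    intro F
    obtain ⟨f, hf⟩ : ∃ f : V, ∀ v, ⟪f, v⟫ = F (v, 0) :=
      ⟨(InnerProductSpace.toDual ℝ V).symm (F.comp (ContinuousLinearMap.inl ℝ V Q)),
        fun v => by rw [InnerProductSpace.toDual_symm_apply]; rfl⟩
    obtain ⟨g, hg⟩ : ∃ g : Q, ∀ q, ⟪g, q⟫ = F (0, q) :=
      ⟨(InnerProductSpace.toDual ℝ Q).symm (F.comp (ContinuousLinearMap.inr ℝ V Q)),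
        fun q => by rw [InnerProductSpace.toDual_symm_apply]; rfl⟩
    obtain ⟨u₀, hu₀⟩ := hBo_surj g
    obtain ⟨r, hr⟩ : ∃ r : ↥K, ∀ v : ↥K, ⟪f - E u₀, (v : V)⟫ = ⟪(r : V), (v : V)⟫ := by
      refine ⟨K.orthogonalProjectionOnto (f - E u₀), fun v => ?_⟩
      have h0 := K.starProjection_inner_eq_zero (f - E u₀) (v : V) v.2
      rw [inner_sub_left, Submodule.starProjection_apply] at h0
      linarith
    obtain ⟨w, hw⟩ := hlaxex r
    have hw' : ∀ v : ↥K, A (w : V) (v : V) = ⟪f - E u₀, (v : V)⟫ := by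
      intro v
      rw [hw v, ← hr v]
    have hBow : Bo (w : V) = 0 := w.2
    have hmem : f - E (u₀ + (w : V)) ∈ Kᗮ := by
      rw [Submodule.mem_orthogonal]
      intro x hx
      rw [real_inner_comm]
      have hsplit : ⟪f - E (u₀ + (w : V)), x⟫ = ⟪f - E u₀, x⟫ - ⟪E (w : V), x⟫ := by
        rw [map_add, inner_sub_left, inner_sub_left, inner_add_left]
        ring
      rw [hsplit, hEinner, hw' ⟨x, hx⟩]
      ring
    rw [← hrange] at hmem
    obtain ⟨p, hp⟩ := hmem
    refine ⟨(u₀ + (w : V), p), ?_⟩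
    intro v q
    have h1 : B v p = ⟪f, v⟫ - ⟪E (u₀ + (w : V)), v⟫ := by
      rw [← hBtinner, show Bt p = _ from hp, inner_sub_left]
    have h2 : B (u₀ + (w : V)) q = ⟪g, q⟫ := by
      rw [← hBoinner]
      have hbu : Bo (u₀ + (w : V)) = g := by rw [map_add, hBow, add_zero, hu₀]
      rw [hbu]
    have h4 : F (v, q) = F (v, 0) + F (0, q) := by
      rw [← map_add]
      norm_num
    show A (u₀ + (w : V)) v + B v p + B (u₀ + (w : V)) q = F (v, q)
    rw [h1, h2, ← hEinner (u₀ + (w : V)) v, h4, ← hf, ← hg]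
    ring
  -- Uniqueness of the homogeneous problem
  have huniq : ∀ (u : V) (p : Q), (∀ v : V, ∀ q : Q, A u v + B v p + B u q = 0) →
      u = 0 ∧ p = 0 := by
    intro u p h
    have hu_memK : ∀ q : Q, B u q = 0 := by
      intro q
      have h0 := h 0 q
      simpa using h0
    have hu0 : u = 0 := by
      have hBup : B u p = 0 := hu_memK p
      have hAuu : A u u = 0 := by
        have h0 := h u 0
        have hBu0 : B u (0 : Q) = 0 := (B u).map_zero
        rw [hBup, hBu0] at h0
        linarith
      have hco := hA_coercive u hu_memK
      rw [hAuu] at hco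
      have hn : ‖u‖ ^ 2 = 0 :=
        le_antisymm (by nlinarith [sq_nonneg ‖u‖]) (sq_nonneg _)
      exact norm_eq_zero.mp (sq_eq_zero_iff.mp hn)
    subst hu0
    refine ⟨rfl, ?_⟩
    have hBvp : ∀ v : V, B v p = 0 := by
      intro v
      have h0 := h v 0
      simpa using h0
    have hBtp : Bt p = 0 := by
      refine ext_inner_right ℝ fun v => ?_
      rw [hBtinner, hBvp v, inner_zero_left]
    exact hBt_inj p hBtp
  constructor
  · -- existence and uniqueness
    intro F
    obtain ⟨w, hw⟩ := hex F
    refine ⟨w, hw, ?_⟩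
    intro y hy
    have hdiff : ∀ v : V, ∀ q : Q,
        A (y.1 - w.1) v + B v (y.2 - w.2) + B (y.1 - w.1) q = 0 := by
      intro v q
      have h1 := hy v q
      have h2 := hw v q
      simp only [map_sub, ContinuousLinearMap.sub_apply]
      linarith
    obtain ⟨h1, h2⟩ := huniq _ _ hdiff
    have e1 : y.1 = w.1 := by rwa [sub_eq_zero] at h1
    have e2 : y.2 = w.2 := by rwa [sub_eq_zero] at h2
    exact Prod.ext e1 e2
  · -- a priori bound
    have hb' : (0:ℝ) < β⁻¹ := inv_pos.mpr hβ
    have ha' : (0:ℝ) < α⁻¹ := inv_pos.mpr hα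
    have hAn : (0:ℝ) ≤ ‖A‖ := ContinuousLinearMap.opNorm_nonneg A
    refine ⟨β⁻¹ + α⁻¹ * (1 + ‖A‖ * β⁻¹) +
      β⁻¹ * (1 + ‖A‖ * (β⁻¹ + α⁻¹ * (1 + ‖A‖ * β⁻¹))), ?_, ?_⟩
    · have h1 : 0 ≤ ‖A‖ * β⁻¹ := mul_nonneg hAn hb'.le
      have h2 : 0 < α⁻¹ * (1 + ‖A‖ * β⁻¹) := mul_pos ha' (by linarith)
      have h3 : 0 ≤ ‖A‖ * (β⁻¹ + α⁻¹ * (1 + ‖A‖ * β⁻¹)) := mul_nonneg hAn (by linarith)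
      have h4 : 0 < β⁻¹ * (1 + ‖A‖ * (β⁻¹ + α⁻¹ * (1 + ‖A‖ * β⁻¹))) :=
        mul_pos hb' (by linarith)
      linarith
    intro F w hw
    obtain ⟨f, hf⟩ : ∃ f : V, ∀ v, ⟪f, v⟫ = F (v, 0) :=
      ⟨(InnerProductSpace.toDual ℝ V).symm (F.comp (ContinuousLinearMap.inl ℝ V Q)),
        fun v => by rw [InnerProductSpace.toDual_symm_apply]; rfl⟩
    obtain ⟨g, hg⟩ : ∃ g : Q, ∀ q, ⟪g, q⟫ = F (0, q) :=
      ⟨(InnerProductSpace.toDual ℝ Q).symm (F.comp (ContinuousLinearMap.inr ℝ V Q)),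
        fun q => by rw [InnerProductSpace.toDual_symm_apply]; rfl⟩
    have hfF : ‖f‖ ≤ ‖F‖ := by
      have h1 : ‖f‖ ^ 2 = F (f, 0) := by
        rw [← hf f, real_inner_self_eq_norm_sq]
      have h2 : F (f, 0) ≤ ‖F‖ * ‖f‖ := by
        have h3 := F.le_opNorm (f, (0:Q))
        have h4 : ‖((f, (0:Q)) : V × Q)‖ = ‖f‖ := by
          simp [Prod.norm_def]
        rw [h4] at h3
        calc F (f, (0:Q)) ≤ |F (f, (0:Q))| := le_abs_self _
          _ = ‖F (f, (0:Q))‖ := (Real.norm_eq_abs _).symm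
          _ ≤ ‖F‖ * ‖f‖ := h3
      rcases eq_or_lt_of_le (norm_nonneg f) with h0 | h0
      · rw [← h0]; exact norm_nonneg F
      · have h5 : ‖f‖ * ‖f‖ ≤ ‖F‖ * ‖f‖ := by rw [← pow_two]; linarith
        exact le_of_mul_le_mul_right h5 h0
    have hgF : ‖g‖ ≤ ‖F‖ := by
      have h1 : ‖g‖ ^ 2 = F (0, g) := by
        rw [← hg g, real_inner_self_eq_norm_sq]
      have h2 : F (0, g) ≤ ‖F‖ * ‖g‖ := by
        have h3 := F.le_opNorm ((0:V), g)
        have h4 : ‖(((0:V), g) : V × Q)‖ = ‖g‖ := by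
          simp [Prod.norm_def]
        rw [h4] at h3
        calc F ((0:V), g) ≤ |F ((0:V), g)| := le_abs_self _
          _ = ‖F ((0:V), g)‖ := (Real.norm_eq_abs _).symm
          _ ≤ ‖F‖ * ‖g‖ := h3
      rcases eq_or_lt_of_le (norm_nonneg g) with h0 | h0
      · rw [← h0]; exact norm_nonneg F
      · have h5 : ‖g‖ * ‖g‖ ≤ ‖F‖ * ‖g‖ := by rw [← pow_two]; linarith
        exact le_of_mul_le_mul_right h5 h0
    have heq1 : ∀ v : V, A w.1 v + B v w.2 = ⟪f, v⟫ := by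
      intro v
      have h0 := hw v 0
      have hBu0 : B w.1 (0 : Q) = 0 := (B w.1).map_zero
      rw [hBu0, ← hf v] at h0
      linarith
    have heq2 : ∀ q : Q, B w.1 q = ⟪g, q⟫ := by
      intro q
      have h0 := hw 0 q
      have hA0 : A w.1 (0 : V) = 0 := (A w.1).map_zero
      have hB0 : B (0 : V) w.2 = 0 := by rw [map_zero]; rfl
      rw [hA0, hB0, ← hg q] at h0
      linarith
    have hEu : E w.1 + Bt w.2 = f := by
      refine ext_inner_right ℝ fun v => ?_
      rw [inner_add_left, hEinner, hBtinner]
      exact heq1 v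
    have hBou : Bo w.1 = g := by
      refine ext_inner_right ℝ fun q => ?_
      rw [hBoinner]
      exact heq2 q
    obtain ⟨k, w0, hdecomp, hkmem, hw0mem⟩ :
        ∃ (k : V) (w0 : V), w.1 = w0 + k ∧ k ∈ K ∧ w0 ∈ Kᗮ :=
      ⟨K.orthogonalProjectionOnto w.1, w.1 - K.orthogonalProjectionOnto w.1, by abel,
        (K.orthogonalProjectionOnto w.1).2, K.sub_starProjection_mem_orthogonal w.1⟩
    have hBok : Bo k = 0 := hkmem
    have hBow0 : Bo w0 = g := by
      have h1 : Bo w.1 = Bo w0 + Bo k := by rw [hdecomp, map_add]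
      rw [hBok, add_zero] at h1
      rw [← h1, hBou]
    -- bound on w0
    have hW0 : β * ‖w0‖ ≤ ‖g‖ := by
      have hmem2 : w0 ∈ (LinearMap.range (Bt : Q →ₗ[ℝ] V) : Submodule ℝ V) := by rw [hrange]; exact hw0mem
      obtain ⟨s, hs⟩ := hmem2
      have h1 : ‖w0‖ ^ 2 = ⟪s, g⟫ := by
        rw [← real_inner_self_eq_norm_sq]
        calc ⟪w0, w0⟫ = ⟪Bt s, w0⟫ := by rw [show Bt s = w0 from hs]
          _ = B w0 s := hBtinner s w0
          _ = ⟪Bo w0, s⟫ := (hBoinner w0 s).symm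
          _ = ⟪s, g⟫ := by rw [hBow0, real_inner_comm]
      have h2 : ⟪s, g⟫ ≤ ‖s‖ * ‖g‖ := real_inner_le_norm s g
      have h3 : β * ‖s‖ ≤ ‖w0‖ := by rw [← show Bt s = w0 from hs]; exact hBt_below s
      rcases eq_or_lt_of_le (norm_nonneg w0) with h0 | h0
      · rw [← h0, mul_zero]; positivity
      · nlinarith [norm_nonneg s, norm_nonneg g]
    -- bound on k
    have hK1 : α * ‖k‖ ≤ ‖f‖ + ‖A‖ * ‖w0‖ := by
      have hkK : ∀ q : Q, B k q = 0 := by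
        intro q
        rw [← hBoinner, hBok, inner_zero_left]
      have h0 := heq1 k
      have hBkp : B k w.2 = 0 := hkK w.2
      have hAkk : A k k = ⟪f, k⟫ - A w0 k := by
        have hsplit : A w.1 k = A w0 k + A k k := by
          rw [hdecomp, map_add, ContinuousLinearMap.add_apply]
        rw [hsplit, hBkp] at h0
        linarith
      have hco := hA_coercive k hkK
      have hb1 : ⟪f, k⟫ ≤ ‖f‖ * ‖k‖ := real_inner_le_norm _ _
      have hb2 : |A w0 k| ≤ ‖A‖ * ‖w0‖ * ‖k‖ := by
        have h5 : ‖A w0 k‖ ≤ ‖A w0‖ * ‖k‖ := (A w0).le_opNorm _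
        have h6 : ‖A w0‖ ≤ ‖A‖ * ‖w0‖ := A.le_opNorm w0
        have h7 : ‖A w0‖ * ‖k‖ ≤ ‖A‖ * ‖w0‖ * ‖k‖ :=
          mul_le_mul_of_nonneg_right h6 (norm_nonneg _)
        calc |A w0 k| = ‖A w0 k‖ := (Real.norm_eq_abs _).symm
          _ ≤ ‖A w0‖ * ‖k‖ := h5
          _ ≤ ‖A‖ * ‖w0‖ * ‖k‖ := h7
      have hb2' : -(‖A‖ * ‖w0‖ * ‖k‖) ≤ A w0 k := neg_le_of_abs_le hb2
      rcases eq_or_lt_of_le (norm_nonneg k) with h0' | h0'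
      · rw [← h0', mul_zero]
        have hnn : (0:ℝ) ≤ ‖A‖ * ‖w0‖ := mul_nonneg (ContinuousLinearMap.opNorm_nonneg A) (norm_nonneg _)
        linarith [norm_nonneg f]
      · nlinarith [hco, hAkk]
    have hnu : ‖w.1‖ ≤ ‖w0‖ + ‖k‖ := by
      rw [hdecomp]
      exact norm_add_le _ _
    -- bound on p
    have hP1 : β * ‖w.2‖ ≤ ‖f‖ + ‖A‖ * ‖w.1‖ := by
      have h1 : Bt w.2 = f - E w.1 := by rw [← hEu]; abel
      have h2 : β * ‖w.2‖ ≤ ‖Bt w.2‖ := hBt_below w.2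
      have h5 : ‖Bt w.2‖ ≤ ‖f‖ + ‖A‖ * ‖w.1‖ := by
        rw [h1]
        calc ‖f - E w.1‖ ≤ ‖f‖ + ‖E w.1‖ := norm_sub_le _ _
          _ ≤ ‖f‖ + ‖A‖ * ‖w.1‖ := by linarith [hEnorm w.1]
      linarith
    -- assemble
    have hw0b : ‖w0‖ ≤ β⁻¹ * ‖F‖ := by
      rw [inv_mul_eq_div, le_div_iff₀ hβ]
      nlinarith
    have hkb : ‖k‖ ≤ α⁻¹ * (1 + ‖A‖ * β⁻¹) * ‖F‖ := by
      have h1 : α * ‖k‖ ≤ ‖F‖ + ‖A‖ * (β⁻¹ * ‖F‖) := by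
        have h2 := mul_le_mul_of_nonneg_left hw0b hAn
        linarith [hfF]
      have h2 : α⁻¹ * (1 + ‖A‖ * β⁻¹) * ‖F‖ = α⁻¹ * (‖F‖ + ‖A‖ * (β⁻¹ * ‖F‖)) := by ring
      rw [h2, inv_mul_eq_div, le_div_iff₀ hα]
      linarith [h1]
    have hub : ‖w.1‖ ≤ (β⁻¹ + α⁻¹ * (1 + ‖A‖ * β⁻¹)) * ‖F‖ := by
      calc ‖w.1‖ ≤ ‖w0‖ + ‖k‖ := hnu
        _ ≤ β⁻¹ * ‖F‖ + α⁻¹ * (1 + ‖A‖ * β⁻¹) * ‖F‖ := add_le_add hw0b hkb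
        _ = (β⁻¹ + α⁻¹ * (1 + ‖A‖ * β⁻¹)) * ‖F‖ := by ring
    have hpb : ‖w.2‖ ≤ β⁻¹ * (1 + ‖A‖ * (β⁻¹ + α⁻¹ * (1 + ‖A‖ * β⁻¹))) * ‖F‖ := by
      have h1 : β * ‖w.2‖ ≤ ‖F‖ + ‖A‖ * ((β⁻¹ + α⁻¹ * (1 + ‖A‖ * β⁻¹)) * ‖F‖) := by
        have h2 := mul_le_mul_of_nonneg_left hub hAn
        linarith [hfF]
      have h2 : β⁻¹ * (1 + ‖A‖ * (β⁻¹ + α⁻¹ * (1 + ‖A‖ * β⁻¹))) * ‖F‖ =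
          β⁻¹ * (‖F‖ + ‖A‖ * ((β⁻¹ + α⁻¹ * (1 + ‖A‖ * β⁻¹)) * ‖F‖)) := by ring
      rw [h2, inv_mul_eq_div, le_div_iff₀ hβ]
      linarith [h1]
    calc ‖w.1‖ + ‖w.2‖ ≤ (β⁻¹ + α⁻¹ * (1 + ‖A‖ * β⁻¹)) * ‖F‖ +
        β⁻¹ * (1 + ‖A‖ * (β⁻¹ + α⁻¹ * (1 + ‖A‖ * β⁻¹))) * ‖F‖ := add_le_add hub hpb
      _ = (β⁻¹ + α⁻¹ * (1 + ‖A‖ * β⁻¹) +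
          β⁻¹ * (1 + ‖A‖ * (β⁻¹ + α⁻¹ * (1 + ‖A‖ * β⁻¹)))) * ‖F‖ := by ring
end

section
/- Operator preconditioning: if 𝒜 : W → W′ is a symmetric isomorphism between a Hilbert space W and its dual, and ℬ : W′ → W is the Riesz map (inverse of the Riesz isomorphism), then ℬ𝒜 : W → W is a bounded operator with bounded inverse, and its spectrum (with respect to the W inner product) is contained in [−‖𝒜‖‖ℬ‖, −c] ∪ [c, ‖𝒜‖‖ℬ‖] for some c > 0 depending only on the norms of 𝒜, 𝒜⁻¹, ℬ, ℬ⁻¹. -/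
open RealInnerProductSpace

/-- Operator preconditioning.  `𝒜 : W → W′` is a bounded symmetric
isomorphism of the Hilbert space `W` onto its dual, and `ℬ : W′ → W` is the Riesz
map (`f w = ⟪ℬ f, w⟫` for all `f, w`).  Then `ℬ𝒜 : W → W` is a bounded operator with
bounded inverse, and its spectrum is contained in
`[−‖𝒜‖‖ℬ‖, −c] ∪ [c, ‖𝒜‖‖ℬ‖]` for some `c > 0`. -/
theorem operator_preconditioning_spectrum
    {W : Type*} [NormedAddCommGroup W] [InnerProductSpace ℝ W] [CompleteSpace W]
    (𝒜 : W →L[ℝ] StrongDual ℝ W)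
    (h𝒜_symm : ∀ u v : W, 𝒜 u v = 𝒜 v u)
    (h𝒜_bij : Function.Bijective 𝒜)
    (ℬ : StrongDual ℝ W →L[ℝ] W)
    (hℬ : ∀ f : StrongDual ℝ W, ∀ w : W, f w = ⟪ℬ f, w⟫) :
    (∃ M : W →L[ℝ] W, M.comp (ℬ.comp 𝒜) = ContinuousLinearMap.id ℝ W ∧
        (ℬ.comp 𝒜).comp M = ContinuousLinearMap.id ℝ W) ∧
      ∃ c > 0, spectrum ℝ (ℬ.comp 𝒜) ⊆
        Set.Icc (-(‖𝒜‖ * ‖ℬ‖)) (-c) ∪ Set.Icc c (‖𝒜‖ * ‖ℬ‖) := by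
  -- ℬ is bijective
  have hℬinj : Function.Injective ℬ := by
    intro f g hfg
    ext w
    have h1 := hℬ f w
    have h2 := hℬ g w
    rw [hfg] at h1
    rw [h1, h2]
  have hℬsurj : Function.Surjective ℬ := by
    intro w
    refine ⟨innerSL ℝ w, ?_⟩
    apply ext_inner_right ℝ
    intro v
    have := hℬ (innerSL ℝ w) v
    simp only [innerSL_apply_apply] at this
    rw [← this]
  set T := ℬ.comp 𝒜 with hT
  have hTbij : Function.Bijective T := by
    have : (T : W → W) = ℬ ∘ 𝒜 := rfl
    rw [Function.Bijective, this]
    exact ⟨hℬinj.comp h𝒜_bij.1, hℬsurj.comp h𝒜_bij.2⟩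
  -- continuous inverse via open mapping theorem
  have hker : LinearMap.ker (T : W →ₗ[ℝ] W) = ⊥ := LinearMap.ker_eq_bot_of_injective hTbij.1
  have hrange : LinearMap.range (T : W →ₗ[ℝ] W) = ⊤ := LinearMap.range_eq_top.mpr hTbij.2
  let e : W ≃L[ℝ] W := ContinuousLinearEquiv.ofBijective T hker hrange
  let M : W →L[ℝ] W := e.symm.toContinuousLinearMap
  have hMT : M.comp T = ContinuousLinearMap.id ℝ W := by
    ext x
    exact ContinuousLinearEquiv.ofBijective_symm_apply_apply T hker hrange x
  have hTM : T.comp M = ContinuousLinearMap.id ℝ W := by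
    ext x
    exact ContinuousLinearEquiv.ofBijective_apply_symm_apply T hker hrange x
  refine ⟨⟨M, hMT, hTM⟩, (‖M‖ + 1)⁻¹, by positivity, ?_⟩
  -- T as a unit of the algebra W →L[ℝ] W
  have hunit : IsUnit T := ⟨⟨T, M, hTM, hMT⟩, rfl⟩
  intro lam hlam
  have hmem := spectrum.mem_iff.mp hlam
  -- lower bound on |lam|
  have hlow : (‖M‖ + 1)⁻¹ ≤ |lam| := by
    by_contra hcon
    push_neg at hcon
    have hsmall : ‖lam • M‖ < 1 := by
      have h1 : ‖lam • M‖ = |lam| * ‖M‖ := by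
        rw [norm_smul lam M, Real.norm_eq_abs]
      have h3 : (0:ℝ) < ‖M‖ + 1 := by positivity
      have h4 : (‖M‖ + 1)⁻¹ * (‖M‖ + 1) = 1 := inv_mul_cancel₀ (ne_of_gt h3)
      have h5 : |lam| ≥ 0 := abs_nonneg _
      have h6 : ‖M‖ ≥ 0 := norm_nonneg _
      rw [h1]
      nlinarith
    have hu1 : IsUnit (1 - lam • M) := (Units.oneSub (lam • M) hsmall).isUnit
    have hprod : T * (1 - lam • M) = T - lam • (1 : W →L[ℝ] W) := by
      have : T * (lam • M) = lam • (T * M) := by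
        rw [mul_smul_comm]
      rw [mul_sub, mul_one, this]
      congr 1
      show lam • (T.comp M) = lam • ContinuousLinearMap.id ℝ W
      rw [hTM]
    have hu2 : IsUnit (T - lam • (1 : W →L[ℝ] W)) := hprod ▸ hunit.mul hu1
    apply hmem
    have : algebraMap ℝ (W →L[ℝ] W) lam - T = -(T - lam • (1 : W →L[ℝ] W)) := by
      rw [neg_sub, Algebra.algebraMap_eq_smul_one]
    rw [this]
    exact hu2.neg
  -- upper bound on |lam|
  have hup : |lam| ≤ ‖𝒜‖ * ‖ℬ‖ := by
    by_contra hcon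
    push_neg at hcon
    have hlamne : lam ≠ 0 := by
      intro h; rw [h, abs_zero] at hcon
      exact absurd hcon (not_lt.mpr (by positivity))
    have hsmall : ‖lam⁻¹ • T‖ < 1 := by
      have hTle : ‖T‖ ≤ ‖𝒜‖ * ‖ℬ‖ := by
        calc ‖T‖ ≤ ‖ℬ‖ * ‖𝒜‖ := ContinuousLinearMap.opNorm_comp_le _ _
        _ = ‖𝒜‖ * ‖ℬ‖ := mul_comm _ _
      have h1 : ‖lam⁻¹ • T‖ = |lam|⁻¹ * ‖T‖ := by
        rw [norm_smul lam⁻¹ T, Real.norm_eq_abs, abs_inv]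
      rw [h1, inv_mul_lt_iff₀ (abs_pos.mpr hlamne), mul_one]
      exact lt_of_le_of_lt hTle hcon
    have hu1 : IsUnit (1 - lam⁻¹ • T) := (Units.oneSub (lam⁻¹ • T) hsmall).isUnit
    have hu0 : IsUnit (algebraMap ℝ (W →L[ℝ] W) lam) :=
      (isUnit_iff_ne_zero.mpr hlamne).map (algebraMap ℝ (W →L[ℝ] W))
    have hu2 : IsUnit (algebraMap ℝ (W →L[ℝ] W) lam * (1 - lam⁻¹ • T)) := hu0.mul hu1
    apply hmem
    have : algebraMap ℝ (W →L[ℝ] W) lam - T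
        = algebraMap ℝ (W →L[ℝ] W) lam * (1 - lam⁻¹ • T) := by
      rw [← Algebra.smul_def, smul_sub, smul_smul, mul_inv_cancel₀ hlamne, one_smul,
        Algebra.algebraMap_eq_smul_one]
    rw [this]
    exact hu2
  rcases le_or_gt lam 0 with h0 | h0
  · left
    rw [abs_of_nonpos h0] at hlow hup
    exact ⟨by linarith, by linarith⟩
  · right
    rw [abs_of_pos h0] at hlow hup
    exact ⟨hlow, hup⟩
end
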